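/- Fix α > 0, x_max ∈ (0,1), a strictly concave strictly increasing reward u, and a total time budget S > 0 for k ≥ 2 rest-work cycles each starting and ending at x_max. Among all choices of rest times r₁,...,r_k > 0 with Σᵢ f(rᵢ) = S (where f(r) = r + t(r) and t(r) = (1/α) ln((1 - x_max e^{-αr})/(1 - x_max))), the total reward Σᵢ u(t(rᵢ)) is maximized when all rᵢ are equal. -/

import Mathlib

/-!
Writing `s = r + t(r)` for the length of a cycle with rest `r`, the work time is a function of the
cycle length alone: `t(r) = g(s)` with `g(s) = -(1/α) log((1 - x) + x e^{-α s})`, and `g` is concave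
because `g'(s) = x / ((1 - x) e^{α s} + x)` decreases. Jensen's inequality for `g` shows that under a
fixed total duration the average work time is at most that of the equal schedule; Jensen's inequality
for `u` and its monotonicity then bound the total reward.
-/

open Real Set

noncomputable def workTime (α x r : ℝ) : ℝ :=
  (1 / α) * log ((1 - x * exp (-α * r)) / (1 - x))

noncomputable def workTimeOfCycle (α x s : ℝ) : ℝ :=
  -(1 / α) * log ((1 - x) + x * exp (-α * s))

lemma ConcaveOn.sum_le_card_mul_map_mean {ι : Type*} [Fintype ι] {s : Set ℝ} {φ : ℝ → ℝ}
    (hφ : ConcaveOn ℝ s φ) {p : ι → ℝ} (hp : ∀ i, p i ∈ s) :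
    ∑ i, φ (p i) ≤ Fintype.card ι * φ ((∑ i, p i) / Fintype.card ι) := by
  cases isEmpty_or_nonempty ι
  · simp
  have hcard : (0 : ℝ) < Fintype.card ι := by exact_mod_cast Fintype.card_pos
  have hJensen := hφ.le_map_sum (t := Finset.univ) (w := fun _ => (Fintype.card ι : ℝ)⁻¹)
    (fun _ _ => by positivity) (by simp [hcard.ne']) (fun i _ => hp i)
  simp only [smul_eq_mul, ← Finset.mul_sum] at hJensen
  rwa [inv_mul_eq_div, inv_mul_eq_div, div_le_iff₀' hcard] at hJensen

section WorkTime

variable {α x : ℝ}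

lemma mul_exp_neg_mul_lt_one (hα : 0 ≤ α) (h0 : 0 ≤ x) (hx : x < 1) {r : ℝ} (hr : 0 ≤ r) :
    x * exp (-α * r) < 1 := by
  have : exp (-α * r) ≤ 1 := exp_le_one_iff.2 (by nlinarith)
  nlinarith

lemma workTime_nonneg (hα : 0 ≤ α) (h0 : 0 ≤ x) (hx : x < 1) {r : ℝ} (hr : 0 ≤ r) :
    0 ≤ workTime α x r := by
  have : exp (-α * r) ≤ 1 := exp_le_one_iff.2 (by nlinarith)
  have hlog : 0 ≤ log ((1 - x * exp (-α * r)) / (1 - x)) :=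
    log_nonneg <| (one_le_div (by linarith)).2 (by nlinarith)
  unfold workTime
  positivity

lemma workTime_eq_workTimeOfCycle (hα : α ≠ 0) (hx : x < 1) {r : ℝ}
    (hr : x * exp (-α * r) < 1) :
    workTime α x r = workTimeOfCycle α x (r + workTime α x r) := by
  set E := exp (-α * r)
  have hc : 0 < 1 - x := by linarith
  have hA : 0 < 1 - x * E := by linarith
  have hexp : exp (-α * workTime α x r) = (1 - x) / (1 - x * E) := by
    rw [workTime, ← mul_assoc, neg_mul, mul_one_div_cancel hα, neg_one_mul, exp_neg,
      exp_log (by positivity), inv_div]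
  -- `e^{-α (r + t)} = E (1 - x) / (1 - x E)`, and `1 - x + x E (1 - x) / (1 - x E) = (1 - x) / (1 - x E)`.
  have hden : (1 - x) + x * exp (-α * (r + workTime α x r)) = ((1 - x * E) / (1 - x))⁻¹ := by
    rw [mul_add, exp_add, hexp, inv_div]
    change 1 - x + x * (E * ((1 - x) / (1 - x * E))) = _
    field_simp
    ring
  rw [workTimeOfCycle, hden, log_inv, workTime]
  ring

lemma hasDerivAt_workTimeOfCycle (hα : α ≠ 0) (h0 : 0 ≤ x) (hx : x < 1) (s : ℝ) :
    HasDerivAt (workTimeOfCycle α x) (x / ((1 - x) * exp (α * s) + x)) s := by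
  have hden : 0 < (1 - x) + x * exp (-α * s) := by
    have : 0 ≤ x * exp (-α * s) := by positivity
    linarith
  have hinner : HasDerivAt (fun s => (1 - x) + x * exp (-α * s)) (x * (exp (-α * s) * -α)) s :=
    ((((hasDerivAt_id s).const_mul (-α)).exp).const_mul x).const_add (1 - x) |>.congr_deriv
      (by simp)
  refine ((hinner.log hden.ne').const_mul (-(1 / α))).congr_deriv ?_
  rw [show α * s = -(-α * s) by ring, exp_neg]
  field_simp

lemma concaveOn_workTimeOfCycle (hα : 0 < α) (h0 : 0 ≤ x) (hx : x < 1) :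
    ConcaveOn ℝ univ (workTimeOfCycle α x) := by
  have hderiv : deriv (workTimeOfCycle α x) = fun s => x / ((1 - x) * exp (α * s) + x) :=
    funext fun s => (hasDerivAt_workTimeOfCycle hα.ne' h0 hx s).deriv
  refine Antitone.concaveOn_univ_of_deriv
    (fun s => (hasDerivAt_workTimeOfCycle hα.ne' h0 hx s).differentiableAt) ?_
  intro s t hst
  rw [hderiv]
  have hc : 0 < 1 - x := by linarith
  exact div_le_div_of_nonneg_left h0 (by positivity) (by gcongr)

end WorkTime

theorem equal_cycles_optimal_general
    (α xmax S : ℝ) (k : ℕ) (hα : 0 < α) (h0 : 0 < xmax) (h1 : xmax < 1)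
    (u : ℝ → ℝ) (hconc : StrictConcaveOn ℝ (Set.Ici 0) u)
    (hmono : StrictMonoOn u (Set.Ici 0))
    (tw : ℝ → ℝ)
    (htw : ∀ r : ℝ, tw r = (1 / α) * Real.log ((1 - xmax * Real.exp (-α * r)) / (1 - xmax)))
    (f : ℝ → ℝ) (hf : ∀ r : ℝ, f r = r + tw r)
    (r : Fin k → ℝ) (hr : ∀ i, 0 < r i) (hsum : ∑ i, f (r i) = S)
    (ρ : ℝ) (hρ : 0 < ρ) (hρsum : (k : ℝ) * f ρ = S) :
    ∑ i, u (tw (r i)) ≤ (k : ℝ) * u (tw ρ) := by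
  obtain rfl : tw = workTime α xmax := funext htw
  obtain rfl : f = fun r => r + workTime α xmax r := funext hf
  rcases k.eq_zero_or_pos with rfl | hk
  · simp
  have hk' : (0 : ℝ) < k := by exact_mod_cast hk
  have ht_nonneg {s : ℝ} (hs : 0 < s) : 0 ≤ workTime α xmax s :=
    workTime_nonneg hα.le h0.le h1 hs.le
  have ht_eq {s : ℝ} (hs : 0 < s) :
      workTime α xmax s = workTimeOfCycle α xmax (s + workTime α xmax s) :=
    workTime_eq_workTimeOfCycle hα.ne' h1 (mul_exp_neg_mul_lt_one hα.le h0.le h1 hs.le)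
  have htotal : ∑ i, workTime α xmax (r i) ≤ k * workTime α xmax ρ :=
    calc ∑ i, workTime α xmax (r i)
        = ∑ i, workTimeOfCycle α xmax (r i + workTime α xmax (r i)) :=
          Finset.sum_congr rfl fun i _ => ht_eq (hr i)
      _ ≤ k * workTimeOfCycle α xmax ((∑ i, (r i + workTime α xmax (r i))) / k) := by
          simpa using (concaveOn_workTimeOfCycle hα h0.le h1).sum_le_card_mul_map_mean
            (p := fun i => r i + workTime α xmax (r i)) fun _ => mem_univ _
      _ = k * workTime α xmax ρ := by
          rw [hsum, ← hρsum, mul_div_cancel_left₀ _ hk'.ne', ← ht_eq hρ]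
  calc ∑ i, u (workTime α xmax (r i))
      ≤ k * u ((∑ i, workTime α xmax (r i)) / k) := by
        simpa using hconc.concaveOn.sum_le_card_mul_map_mean fun i => ht_nonneg (hr i)
    _ ≤ k * u (workTime α xmax ρ) := by
        gcongr
        exact hmono.monotoneOn (div_nonneg (Finset.sum_nonneg fun i _ => ht_nonneg (hr i)) hk'.le)
          (ht_nonneg hρ) ((div_le_iff₀' hk').2 htotal)

theorem equal_cycles_optimal
    (α xmax S : ℝ) (k : ℕ) (hα : 0 < α) (h0 : 0 < xmax) (h1 : xmax < 1)
    (hS : 0 < S) (hk : 2 ≤ k)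
    (u : ℝ → ℝ) (hconc : StrictConcaveOn ℝ (Set.Ici 0) u)
    (hmono : StrictMonoOn u (Set.Ici 0))
    (tw : ℝ → ℝ)
    (htw : ∀ r : ℝ, tw r = (1 / α) * Real.log ((1 - xmax * Real.exp (-α * r)) / (1 - xmax)))
    (f : ℝ → ℝ) (hf : ∀ r : ℝ, f r = r + tw r)
    (r : Fin k → ℝ) (hr : ∀ i, 0 < r i) (hsum : ∑ i, f (r i) = S)
    (ρ : ℝ) (hρ : 0 < ρ) (hρsum : (k : ℝ) * f ρ = S) :
    ∑ i, u (tw (r i)) ≤ (k : ℝ) * u (tw ρ) :=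
  equal_cycles_optimal_general α xmax S k hα h0 h1 u hconc hmono tw htw f hf r hr hsum ρ hρ hρsum
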